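/- Let M and K be positive integers with K dividing M. Then the multinomial coefficient M! / ((M/K)!)^K, counting the number of ways to partition M labeled objects into K labeled groups of equal size M/K, satisfies M!/((M/K)!)^K ≥ exp(M·ln(K)/4), provided K ≥ 2. -/
import Mathlib

open Finset

/-- `j^m ≤ C(j*m, m)`. -/
lemma aux_pow_le_choose (j m : ℕ) : j ^ m ≤ (j * m).choose m := by
  have h1 : j ^ m * m.factorial ≤ (j * m).descFactorial m := by
    rw [Nat.descFactorial_eq_prod_range]
    have : j ^ m * m.factorial = ∏ i ∈ range m, (j * (m - i)) := by
      rw [Finset.prod_mul_distrib, Finset.prod_const, Finset.card_range]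
      congr 1
      rw [← Finset.prod_range_add_one_eq_factorial m]
      rw [← Finset.prod_range_reflect (fun i => i + 1) m]
      apply Finset.prod_congr rfl
      intro i hi
      simp only [Finset.mem_range] at hi
      omega
    rw [this]
    apply Finset.prod_le_prod' <;> try intro i hi
    · simp only [Finset.mem_range] at hi
      rcases Nat.eq_zero_or_pos j with hj | hj
      · simp [hj]
      · have : j * i ≥ i := Nat.le_mul_of_pos_left i hj
        have hmi : i ≤ m := hi.le
        calc j * (m - i) = j * m - j * i := by rw [Nat.mul_sub]
          _ ≤ j * m - i := by omega
  rw [Nat.descFactorial_eq_factorial_mul_choose] at h1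
  have hfac : 0 < m.factorial := m.factorial_pos
  calc j ^ m = j ^ m * m.factorial / m.factorial := by
        rw [Nat.mul_div_cancel _ hfac]
    _ ≤ m.factorial * (j * m).choose m / m.factorial := Nat.div_le_div_right h1
    _ = (j * m).choose m := by rw [Nat.mul_div_cancel_left _ hfac]

/-- `(K*m)! ≥ (m!)^K * (K!)^m`. -/
lemma aux_factorial_lb (m : ℕ) : ∀ K : ℕ,
    m.factorial ^ K * K.factorial ^ m ≤ (K * m).factorial := by
  intro K
  induction K with
  | zero => simp
  | succ K ih =>
    have key : (K * m + m).choose m * m.factorial * (K * m).factorial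
        = (K * m + m).factorial := by
      have := Nat.choose_mul_factorial_mul_factorial
        (show m ≤ K * m + m from Nat.le_add_left m _)
      simpa using this
    have hch : (K + 1) ^ m ≤ (K * m + m).choose m := by
      have := aux_pow_le_choose (K + 1) m
      have e : (K + 1) * m = K * m + m := by ring
      rwa [e] at this
    calc m.factorial ^ (K + 1) * (K + 1).factorial ^ m
        = ((K + 1) ^ m * m.factorial) * (m.factorial ^ K * K.factorial ^ m) := by
          rw [Nat.factorial_succ, mul_pow]; ring
      _ ≤ ((K * m + m).choose m * m.factorial) * (K * m).factorial := by
          apply Nat.mul_le_mul (Nat.mul_le_mul_right _ hch) ih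
      _ = (K * m + m).factorial := key
      _ = ((K + 1) * m).factorial := by ring_nf

/-- `K^K ≤ (K!)^2`. -/
lemma aux_sq_factorial (K : ℕ) : K ^ K ≤ K.factorial ^ 2 := by
  have h1 : K.factorial = ∏ i ∈ range K, (i + 1) :=
    (Finset.prod_range_add_one_eq_factorial K).symm
  have h2 : K.factorial = ∏ i ∈ range K, (K - i) := by
    rw [h1, ← Finset.prod_range_reflect (fun i => i + 1) K]
    apply Finset.prod_congr rfl
    intro i hi
    simp only [Finset.mem_range] at hi
    omega
  have : K.factorial ^ 2 = ∏ i ∈ range K, ((i + 1) * (K - i)) := by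
    rw [Finset.prod_mul_distrib, ← h1, ← h2, sq]
  rw [this]
  calc K ^ K = ∏ _i ∈ range K, K := by rw [Finset.prod_const, Finset.card_range]
    _ ≤ ∏ i ∈ range K, ((i + 1) * (K - i)) := by
        apply Finset.prod_le_prod'
        intro i hi
        simp only [Finset.mem_range] at hi
        nlinarith [Nat.sub_add_cancel hi.le]

theorem stmt1 (M K : ℕ) (hM : 0 < M) (hK : 2 ≤ K) (hdvd : K ∣ M) :
    (Nat.factorial M : ℝ) / (Nat.factorial (M / K) : ℝ) ^ K ≥
      Real.exp ((M : ℝ) * Real.log K / 4) := by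
  obtain ⟨m, hm⟩ := hdvd
  have hKpos : 0 < K := by omega
  have hMK : M / K = m := by rw [hm, Nat.mul_div_cancel_left _ hKpos]
  -- Nat inequality
  have hnat : m.factorial ^ K * K.factorial ^ m ≤ M.factorial := by
    rw [hm]; exact aux_factorial_lb m K
  have hfacpos : (0 : ℝ) < (m.factorial : ℝ) ^ K := by
    positivity
  have hdiv : ((K.factorial : ℝ) ^ m) ≤ (M.factorial : ℝ) / (m.factorial : ℝ) ^ K := by
    rw [le_div_iff₀ hfacpos]
    have := hnat
    have : ((m.factorial ^ K * K.factorial ^ m : ℕ) : ℝ) ≤ ((M.factorial : ℕ) : ℝ) := by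
      exact_mod_cast hnat
    push_cast at this
    linarith
  rw [hMK, ge_iff_le]
  refine le_trans ?_ hdiv
  -- suffices : exp (M log K / 4) ≤ (K!)^m
  have hx : (0 : ℝ) ≤ (K.factorial : ℝ) ^ m := by positivity
  have hsq : Real.exp ((M : ℝ) * Real.log K / 2) ≤ (K.factorial : ℝ) ^ m := by
    have hKK : ((K : ℝ) ^ K) ^ m ≤ ((K.factorial : ℝ) ^ m) ^ 2 := by
      have h := aux_sq_factorial K
      have h' : ((K : ℝ) ^ K) ≤ (K.factorial : ℝ) ^ 2 := by exact_mod_cast h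
      calc ((K : ℝ) ^ K) ^ m ≤ ((K.factorial : ℝ) ^ 2) ^ m := by
            apply pow_le_pow_left₀ (by positivity) h'
        _ = ((K.factorial : ℝ) ^ m) ^ 2 := by ring
    have hexp : Real.exp ((M : ℝ) * Real.log K / 2) ^ 2 = ((K : ℝ) ^ K) ^ m := by
      have e1 : Real.exp ((M : ℝ) * Real.log K / 2) ^ 2
          = Real.exp ((M : ℝ) * Real.log K) := by
        rw [← Real.exp_nat_mul]
        congr 1
        push_cast
        ring
      have e2 : Real.exp ((M : ℝ) * Real.log K) = (K : ℝ) ^ M := by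
        rw [Real.exp_nat_mul, Real.exp_log (by positivity)]
      rw [e1, e2, hm, pow_mul]
    refine le_of_pow_le_pow_left₀ two_ne_zero hx ?_
    rw [hexp]
    exact hKK
  refine le_trans ?_ hsq
  apply Real.exp_le_exp.mpr
  have hlogK : 0 ≤ Real.log K := Real.log_nonneg (by exact_mod_cast hK.trans' (by norm_num))
  have : (0 : ℝ) ≤ (M : ℝ) * Real.log K := by positivity
  linarith
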